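/- Let T be a forest, S a stable set in T of size k, and G obtained from T by adding, for each v ∈ S, a set C_v of m new vertices each adjacent exactly to N_T(v). Then G contains at least m^k copies of T as subgraphs. -/

import Mathlib

open SimpleGraph

/-- The number of copies of `H` in `G`: subgraphs of `G` isomorphic to `H`. -/
noncomputable def numCopies {α β : Type*} (H : SimpleGraph α) (G : SimpleGraph β) : ℕ :=
  Nat.card {G' : G.Subgraph // Nonempty (G'.coe ≃g H)}

/-- The blow-up of `T` at the stable set `S`: for each `v ∈ S`, add `m` new vertices,
each adjacent exactly to the neighbourhood of `v` in `T`. -/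
def blowup {V : Type*} (T : SimpleGraph V) (S : Finset V) (m : ℕ) :
    SimpleGraph (V ⊕ (↥S × Fin m)) :=
  SimpleGraph.fromRel (fun a b =>
    match a, b with
    | Sum.inl u, Sum.inl v => T.Adj u v
    | Sum.inl u, Sum.inr (v, _) => T.Adj u v.1
    | Sum.inr (v, _), Sum.inl u => T.Adj v.1 u
    | _, _ => False)

/-! Picking one of the `m` clones of each `v ∈ S` and keeping the vertices outside `S` maps `T`
injectively and edge-preservingly into the blow-up: `S` is stable and a clone of `v` has the
neighbourhood of `v`. Different picks give copies with different vertex sets, hence `m ^ |S|`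
distinct copies. -/

theorem card_le_numCopies {α β ι : Type*} [Finite β] {H : SimpleGraph α} {G : SimpleGraph β}
    (c : ι → H.Copy G) (hc : Function.Injective fun i => (c i).toSubgraph) :
    Nat.card ι ≤ numCopies H G :=
  Nat.card_le_card_of_injective (fun i => ⟨(c i).toSubgraph, ⟨(c i).isoToSubgraph.symm⟩⟩)
    fun _ _ h => hc (congrArg Subtype.val h)

namespace blowup

variable {V : Type*} (T : SimpleGraph V) (S : Finset V) (m : ℕ)

@[simp] theorem adj_inl_inl {u v : V} : (blowup T S m).Adj (.inl u) (.inl v) ↔ T.Adj u v := by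
  simpa [blowup, T.adj_comm] using fun h => h.ne

@[simp] theorem adj_inl_inr {u : V} {s : S} {i : Fin m} :
    (blowup T S m).Adj (.inl u) (.inr (s, i)) ↔ T.Adj u s := by
  simp [blowup, T.adj_comm]

@[simp] theorem adj_inr_inl {u : V} {s : S} {i : Fin m} :
    (blowup T S m).Adj (.inr (s, i)) (.inl u) ↔ T.Adj s u := by
  simp [blowup, T.adj_comm]

variable {S m} [DecidableEq V]

def pickClones (f : S → Fin m) (v : V) : V ⊕ (S × Fin m) :=
  if h : v ∈ S then .inr (⟨v, h⟩, f ⟨v, h⟩) else .inl v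

theorem pickClones_injective (f : S → Fin m) : Function.Injective (pickClones f) := by
  intro u v h
  by_cases hu : u ∈ S <;> by_cases hv : v ∈ S <;> simp_all [pickClones]

theorem pickClones_eq_inr {f : S → Fin m} {w : V} {s : S} {i : Fin m} :
    pickClones f w = .inr (s, i) ↔ w = s ∧ f s = i := by
  by_cases hw : w ∈ S
  · simp only [pickClones, dif_pos hw, Sum.inr.injEq, Prod.mk.injEq, Subtype.ext_iff]
    constructor <;> rintro ⟨rfl, rfl⟩ <;> exact ⟨rfl, rfl⟩
  · simp only [pickClones, dif_neg hw, reduceCtorEq, false_iff]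
    rintro ⟨rfl, -⟩
    exact hw s.2

theorem pickClones_adj (hS : ∀ u ∈ S, ∀ v ∈ S, ¬ T.Adj u v) (f : S → Fin m) {u v : V}
    (huv : T.Adj u v) : (blowup T S m).Adj (pickClones f u) (pickClones f v) := by
  by_cases hu : u ∈ S <;> by_cases hv : v ∈ S
  · exact absurd huv (hS u hu v hv)
  all_goals simpa [pickClones, hu, hv] using huv

def copyOfPick (hS : ∀ u ∈ S, ∀ v ∈ S, ¬ T.Adj u v) (f : S → Fin m) : T.Copy (blowup T S m) :=
  ⟨⟨pickClones f, pickClones_adj T hS f⟩, pickClones_injective f⟩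

theorem copyOfPick_toSubgraph_injective (hS : ∀ u ∈ S, ∀ v ∈ S, ¬ T.Adj u v) :
    Function.Injective fun f : S → Fin m => (copyOfPick T hS f).toSubgraph := by
  intro f g (hfg : (copyOfPick T hS f).toSubgraph = (copyOfPick T hS g).toSubgraph)
  funext s
  have hmem : Sum.inr (s, f s) ∈ (copyOfPick T hS g).toSubgraph.verts := by
    rw [← hfg]
    exact ⟨s, trivial, pickClones_eq_inr.mpr ⟨rfl, rfl⟩⟩
  obtain ⟨w, -, hw⟩ := hmem
  exact (pickClones_eq_inr.mp hw).2.symm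

end blowup

theorem stmt6 {V : Type} [Fintype V] (T : SimpleGraph V)
    (S : Finset V) (m : ℕ)
    (hstable : ∀ u ∈ S, ∀ v ∈ S, ¬ T.Adj u v) :
    m ^ S.card ≤ numCopies T (blowup T S m) := by
  classical
  calc m ^ S.card = Nat.card (S → Fin m) := by simp
    _ ≤ numCopies T (blowup T S m) :=
      card_le_numCopies _ (blowup.copyOfPick_toSubgraph_injective T hstable)
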